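/- Fix an integer J ≥ 2 and let A_J = J − 2 + 2^{−J+1}. Let {B_t}_{t∈[0,1]} be a standard Brownian motion starting at 0, let y_0 ∈ ℝ, set Y_t = y_0 + B_t, and let X = {X_t}_{t∈[0,1]} = {g(t, Y_t)}_{t∈[0,1]}, where g : [0,1] × ℝ → ℝ is continuous, g(t,·) is strictly increasing for each t ∈ [0,1], and g(t,s) → ∞ as s → ∞ for each t ∈ [0,1]. Let ψ : [0,1] → [0,∞) be continuous and bounded with ψ(p) > 0 for p ∈ (0,1) and ψ(0) = ψ(1) = 0, and define ID using D_t = ψ ∘ F_t, where F_t is the distribution function of X_t. Then, as x varies over C[0,1], the depth functions MBD(x), MHRD(x) and ID(x) computed from the law of X take all values in (0, A_J], (0, 1/2] and ψ((0,1)), respectively. -/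

import Mathlib

set_option synthInstance.maxHeartbeats 400000

open MeasureTheory ProbabilityTheory ENNReal

/-- The unit interval `[0,1]` as a type. -/
abbrev unitI : Type := Set.Icc (0 : ℝ) 1

/-- `B` is a standard Brownian motion on `[0,1]` (with continuous sample paths, realized as a
random element of `C[0,1]`) under the probability measure `P`. -/
def IsStdBrownianMotion {Ω : Type*} [MeasurableSpace Ω] [MeasurableSpace C(unitI, ℝ)]
    (P : Measure Ω) (B : Ω → C(unitI, ℝ)) : Prop :=
  Measurable B ∧
  (∀ ω, B ω ⟨0, Set.left_mem_Icc.mpr zero_le_one⟩ = 0) ∧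
  (∀ s t : unitI, (s : ℝ) ≤ (t : ℝ) →
    P.map (fun ω => B ω t - B ω s) = gaussianReal 0 (Real.toNNReal ((t : ℝ) - (s : ℝ)))) ∧
  (∀ (n : ℕ) (t : Fin (n + 1) → unitI), Monotone t →
    iIndepFun
      (fun k : Fin n => fun ω => B ω (t k.succ) - B ω (t k.castSucc)) P)

/-- The modified band depth of `x ∈ C[0,1]` with respect to a probability measure `μ` on
`C[0,1]`, with `J` independent copies (realized via the product measure `μ^{⊗J}`):
`MBD(x) = ∑_{j=2}^J E[λ({t : min_{1≤i≤j} X_{i,t} ≤ x_t ≤ max_{1≤i≤j} X_{i,t}})]`. -/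
noncomputable def modBandDepth [MeasurableSpace C(unitI, ℝ)]
    (μ : Measure C(unitI, ℝ)) [SigmaFinite μ] (J : ℕ) (x : C(unitI, ℝ)) : ℝ :=
  ∑ j ∈ Finset.Icc 2 J, ∫ ω, (volume {t : unitI |
      (∃ i : Fin J, (i : ℕ) < j ∧ ω i t ≤ x t) ∧
      (∃ i : Fin J, (i : ℕ) < j ∧ x t ≤ ω i t)}).toReal
    ∂(Measure.pi fun _ : Fin J => μ)

/-- The modified half-region depth of `x ∈ C[0,1]` with respect to a probability measure `μ`
on `C[0,1]`: `MHRD(x) = min{ E[λ({t : X_t ≤ x_t})], E[λ({t : X_t ≥ x_t})] }`. -/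
noncomputable def modHalfRegionDepth [MeasurableSpace C(unitI, ℝ)]
    (μ : Measure C(unitI, ℝ)) (x : C(unitI, ℝ)) : ℝ :=
  min (∫ z, (volume {t : unitI | z t ≤ x t}).toReal ∂μ)
      (∫ z, (volume {t : unitI | x t ≤ z t}).toReal ∂μ)

/-- The integrated data depth of `x ∈ C[0,1]` with respect to a probability measure `μ` on
`C[0,1]`, with univariate depths `D_t = ψ ∘ F_t`: `ID(x) = ∫_0^1 ψ(F_t(x_t)) dt`. -/
noncomputable def intDepth [MeasurableSpace C(unitI, ℝ)]
    (μ : Measure C(unitI, ℝ)) (ψ : ℝ → ℝ) (x : C(unitI, ℝ)) : ℝ :=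
  ∫ t : unitI, ψ ((μ {z | z t ≤ x t}).toReal)

/-!
For `r : ℝ` put `x_r(t) = g(t, y₀ + r √t)`. Since `g t` is strictly increasing and `B_t ~ N(0, t)`,
`P(X_t ≤ x_r(t)) = P(B_t ≤ r √t) = Φ(r)` for every `t > 0`, and `x_r(t)` is not an atom of `X_t`.
By Fubini, the three depths of such a curve depend only on `q = Φ(r)`: `ID = ψ(q)`,
`MHRD = min(q, 1 - q)` and `MBD = ∑_{j=2}^J (1 - (1 - q)^j - q^j)`, the last because `x_r(t)`
lies in the band of `j` copies unless all of them are above or all below it. As `Φ` maps `ℝ`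
onto `(0, 1)`, and the `MBD` polynomial is continuous, vanishes at `0` and equals `A_J` at `1/2`,
every value is attained.
-/

open Set

section CDF

variable {μ : Measure ℝ} [IsProbabilityMeasure μ] [NullSingletonClass μ]

lemma continuous_cdf : Continuous (cdf μ) := by
  refine continuous_iff_continuousAt.2 fun x => ?_
  rw [(monotone_cdf μ).continuousAt_iff_leftLim_eq_rightLim, (cdf μ).rightLim_eq]
  have hjump : (cdf μ).measure {x} = 0 := by rw [measure_cdf]; exact measure_singleton x
  rw [StieltjesFunction.measure_singleton, ENNReal.ofReal_eq_zero] at hjump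
  exact le_antisymm ((monotone_cdf μ).leftLim_le le_rfl) (sub_nonpos.1 hjump)

lemma exists_cdf_eq {q : ℝ} (hq : q ∈ Ioo 0 1) : ∃ r, cdf μ r = q :=
  mem_range_of_exists_le_of_exists_ge continuous_cdf
    (((tendsto_cdf_atBot μ).eventually_le_const hq.1).exists)
    (((tendsto_cdf_atTop μ).eventually_const_le hq.2).exists)

lemma measure_Ici_eq_one_sub_cdf (r : ℝ) : μ (Ici r) = ENNReal.ofReal (1 - cdf μ r) := by
  rw [← compl_Iio, prob_compl_eq_one_sub measurableSet_Iio, measure_congr Iio_ae_eq_Iic,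
    ← ofReal_cdf, ← ENNReal.ofReal_one, ← ENNReal.ofReal_sub _ (cdf_nonneg μ r)]

end CDF

lemma gaussianReal_map_mul_sqrt {v : ℝ} (hv : 0 ≤ v) :
    (gaussianReal 0 1).map (· * √v) = gaussianReal 0 v.toNNReal := by
  rw [gaussianReal_map_mul_const, mul_zero, mul_one]
  congr 1
  ext
  simp [Real.sq_sqrt hv, hv]

lemma gaussianReal_Iic_mul_sqrt {v : ℝ} (hv : 0 < v) (r : ℝ) :
    gaussianReal 0 v.toNNReal (Iic (r * √v)) = ENNReal.ofReal (cdf (gaussianReal 0 1) r) := by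
  rw [← gaussianReal_map_mul_sqrt hv.le, Measure.map_apply (by fun_prop) measurableSet_Iic,
    preimage_mul_const_Iic₀ _ (Real.sqrt_pos.2 hv), mul_div_cancel_right₀ _ (by positivity),
    ofReal_cdf]

lemma gaussianReal_Ici_mul_sqrt {v : ℝ} (hv : 0 < v) (r : ℝ) :
    gaussianReal 0 v.toNNReal (Ici (r * √v)) =
      ENNReal.ofReal (1 - cdf (gaussianReal 0 1) r) := by
  have := nullSingletonClass_gaussianReal (μ := 0) one_ne_zero
  rw [← gaussianReal_map_mul_sqrt hv.le, Measure.map_apply (by fun_prop) measurableSet_Ici,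
    preimage_mul_const_Ici₀ _ (Real.sqrt_pos.2 hv), mul_div_cancel_right₀ _ (by positivity),
    measure_Ici_eq_one_sub_cdf]

namespace IsStdBrownianMotion

variable {Ω : Type*} [MeasurableSpace Ω] [MeasurableSpace C(unitI, ℝ)] {P : Measure Ω}
  {B : Ω → C(unitI, ℝ)}

lemma map_eval (hB : IsStdBrownianMotion P B) (t : unitI) :
    P.map (fun ω => B ω t) = gaussianReal 0 (t : ℝ).toNNReal := by
  obtain ⟨-, hB0, hBinc, -⟩ := hB
  simpa only [hB0, sub_zero] using hBinc ⟨0, left_mem_Icc.2 zero_le_one⟩ t t.2.1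

variable [OpensMeasurableSpace C(unitI, ℝ)]

lemma measurable_eval (hB : IsStdBrownianMotion P B) (t : unitI) :
    Measurable fun ω => B ω t :=
  (continuous_eval_const t).measurable.comp hB.1

lemma measure_le_mul_sqrt (hB : IsStdBrownianMotion P B) {t : unitI} (ht : 0 < (t : ℝ))
    (r : ℝ) :
    P {ω | B ω t ≤ r * √t} = ENNReal.ofReal (cdf (gaussianReal 0 1) r) := by
  rw [← gaussianReal_Iic_mul_sqrt ht, ← hB.map_eval,
    Measure.map_apply (hB.measurable_eval t) measurableSet_Iic]
  rfl

lemma measure_ge_mul_sqrt (hB : IsStdBrownianMotion P B) {t : unitI} (ht : 0 < (t : ℝ))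
    (r : ℝ) :
    P {ω | r * √t ≤ B ω t} = ENNReal.ofReal (1 - cdf (gaussianReal 0 1) r) := by
  rw [← gaussianReal_Ici_mul_sqrt ht, ← hB.map_eval,
    Measure.map_apply (hB.measurable_eval t) measurableSet_Ici]
  rfl

end IsStdBrownianMotion

/-- The two inequalities together say that `x t` is a `q`-quantile of the law of `z t` under `μ`
and not an atom of it. -/
def IsQuantileCurve [MeasurableSpace C(unitI, ℝ)] (μ : Measure C(unitI, ℝ)) (x : C(unitI, ℝ))
    (q : ℝ) : Prop :=
  ∀ᵐ t, μ {z | z t ≤ x t} = ENNReal.ofReal q ∧ μ {z | x t ≤ z t} = ENNReal.ofReal (1 - q)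

noncomputable def brownianQuantileCurve (g : unitI → ℝ → ℝ)
    (hg : Continuous fun q : unitI × ℝ => g q.1 q.2) (y0 r : ℝ) : C(unitI, ℝ) where
  toFun t := g t (y0 + r * √t)
  continuous_toFun := hg.comp (continuous_id.prodMk (by fun_prop))

lemma ae_pos_unitI : ∀ᵐ t : unitI, 0 < (t : ℝ) := by
  filter_upwards [volume.ae_ne 0] with t ht
  exact lt_of_le_of_ne t.2.1 (fun h => ht (Subtype.ext h.symm))

lemma IsStdBrownianMotion.isQuantileCurve_map
    {Ω : Type*} [MeasurableSpace Ω] {P : Measure Ω}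
    [MeasurableSpace C(unitI, ℝ)] [OpensMeasurableSpace C(unitI, ℝ)]
    {B : Ω → C(unitI, ℝ)} (hB : IsStdBrownianMotion P B) {y0 : ℝ} {g : unitI → ℝ → ℝ}
    (hgc : Continuous fun q : unitI × ℝ => g q.1 q.2) (hgm : ∀ t, StrictMono (g t))
    {X : Ω → C(unitI, ℝ)} (hXmeas : Measurable X) (hX : ∀ ω t, X ω t = g t (y0 + B ω t))
    (r : ℝ) :
    IsQuantileCurve (P.map X) (brownianQuantileCurve g hgc y0 r) (cdf (gaussianReal 0 1) r) := by
  filter_upwards [ae_pos_unitI] with t ht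
  have hev : Measurable fun z : C(unitI, ℝ) => z t := (continuous_eval_const t).measurable
  constructor
  · rw [Measure.map_apply hXmeas (measurableSet_le hev measurable_const),
      ← hB.measure_le_mul_sqrt ht r]
    congr 1
    ext ω
    simp [brownianQuantileCurve, hX, (hgm t).le_iff_le]
  · rw [Measure.map_apply hXmeas (measurableSet_le measurable_const hev),
      ← hB.measure_ge_mul_sqrt ht r]
    congr 1
    ext ω
    simp [brownianQuantileCurve, hX, (hgm t).le_iff_le]

lemma integral_measure_prodMk_of_ae_eq {α β : Type*} [MeasurableSpace α] [MeasurableSpace β]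
    {ρ : Measure α} [SFinite ρ] {ν : Measure β} [IsProbabilityMeasure ν]
    {S : α → β → Prop} (hS : MeasurableSet {p : α × β | S p.1 p.2}) {c : ℝ} (hc : 0 ≤ c)
    (h : ∀ᵐ b ∂ν, ρ {a | S a b} = ENNReal.ofReal c) :
    ∫ a, (ν {b | S a b}).toReal ∂ρ = c := by
  have hmeas : Measurable fun a => ν {b | S a b} := measurable_measure_prodMk_left hS
  rw [integral_toReal hmeas.aemeasurable (ae_of_all _ fun _ => measure_lt_top _ _)]
  have hswap : ∫⁻ a, ν {b | S a b} ∂ρ = ∫⁻ b, ρ {a | S a b} ∂ν :=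
    (Measure.prod_apply hS).symm.trans (Measure.prod_apply_symm hS)
  rw [hswap, lintegral_congr_ae h, lintegral_const, measure_univ, mul_one,
    ENNReal.toReal_ofReal hc]

section Pi

variable {α : Type*} [MeasurableSpace α] (μ : Measure α) [IsProbabilityMeasure μ] {J j : ℕ}

lemma measure_pi_forall_lt_mem (hjJ : j ≤ J) (A : Set α) :
    Measure.pi (fun _ : Fin J => μ) {ω | ∀ i : Fin J, (i : ℕ) < j → ω i ∈ A} = μ A ^ j := by
  have hset : {ω : Fin J → α | ∀ i : Fin J, (i : ℕ) < j → ω i ∈ A}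
      = ((Finset.univ.filter fun i : Fin J => (i : ℕ) < j : Finset (Fin J)) : Set (Fin J)).pi
          fun _ => A := by
    ext ω
    simp
  rw [hset, Measure.pi_pi_finset, Finset.prod_const, Fin.card_filter_val_lt, min_eq_right hjJ]

lemma measure_pi_band (hj : 0 < j) (hjJ : j ≤ J) {A C : Set α} (hA : MeasurableSet A)
    (hC : MeasurableSet C) (hAC : Disjoint A C) :
    Measure.pi (fun _ : Fin J => μ)
        {ω | (∃ i : Fin J, (i : ℕ) < j ∧ ω i ∉ A) ∧ (∃ i : Fin J, (i : ℕ) < j ∧ ω i ∉ C)} =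
      1 - (μ A ^ j + μ C ^ j) := by
  set E := {ω : Fin J → α | ∀ i : Fin J, (i : ℕ) < j → ω i ∈ A}
  set F := {ω : Fin J → α | ∀ i : Fin J, (i : ℕ) < j → ω i ∈ C}
  have hband : {ω : Fin J → α | (∃ i : Fin J, (i : ℕ) < j ∧ ω i ∉ A) ∧
      (∃ i : Fin J, (i : ℕ) < j ∧ ω i ∉ C)} = (E ∪ F)ᶜ := by
    ext ω
    simp [E, F]
  have hE : MeasurableSet E := measurableSet_setOfPred.2 (by fun_prop)
  have hF : MeasurableSet F := measurableSet_setOfPred.2 (by fun_prop)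
  have hEF : Disjoint E F := Set.disjoint_left.2 fun ω hωE hωF =>
    hAC.ne_of_mem (hωE ⟨0, by omega⟩ hj) (hωF ⟨0, by omega⟩ hj) rfl
  rw [hband, prob_compl_eq_one_sub (hE.union hF), measure_union hEF hF,
    measure_pi_forall_lt_mem μ hjJ, measure_pi_forall_lt_mem μ hjJ]

end Pi

section QuantileCurve

variable [MeasurableSpace C(unitI, ℝ)] {μ : Measure C(unitI, ℝ)} {x : C(unitI, ℝ)} {q : ℝ}

lemma intDepth_eq_of_isQuantileCurve (hx : IsQuantileCurve μ x q) (hq : 0 ≤ q) (ψ : ℝ → ℝ) :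
    intDepth μ ψ x = ψ q := by
  rw [intDepth, integral_congr_ae (g := fun _ => ψ q), integral_const, probReal_univ, one_smul]
  filter_upwards [hx] with t ht
  rw [ht.1, ENNReal.toReal_ofReal hq]

variable [OpensMeasurableSpace C(unitI, ℝ)]

lemma modHalfRegionDepth_eq_of_isQuantileCurve [SFinite μ] (hx : IsQuantileCurve μ x q)
    (hq : q ∈ Icc 0 1) : modHalfRegionDepth μ x = min q (1 - q) := by
  have hev : Continuous fun p : C(unitI, ℝ) × unitI => p.1 p.2 := continuous_eval
  have hxc : Continuous fun p : C(unitI, ℝ) × unitI => x p.2 := by fun_prop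
  rw [modHalfRegionDepth,
    integral_measure_prodMk_of_ae_eq
      (isClosed_le hev hxc).measurableSet hq.1 (hx.mono fun _ ht => ht.1),
    integral_measure_prodMk_of_ae_eq
      (isClosed_le hxc hev).measurableSet (sub_nonneg.2 hq.2) (hx.mono fun _ ht => ht.2)]

lemma IsQuantileCurve.ae_measure_lt [IsProbabilityMeasure μ] (hx : IsQuantileCurve μ x q)
    (hq : q ∈ Icc 0 1) :
    ∀ᵐ t, μ {z | x t < z t} = ENNReal.ofReal (1 - q) ∧ μ {z | z t < x t} = ENNReal.ofReal q := by
  filter_upwards [hx] with t ht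
  have hev : Measurable fun z : C(unitI, ℝ) => z t := (continuous_eval_const t).measurable
  have hgt : {z : C(unitI, ℝ) | x t < z t} = {z | z t ≤ x t}ᶜ := by ext; simp
  have hlt : {z : C(unitI, ℝ) | z t < x t} = {z | x t ≤ z t}ᶜ := by ext; simp
  rw [hgt, hlt, prob_compl_eq_one_sub (measurableSet_le hev measurable_const),
    prob_compl_eq_one_sub (measurableSet_le measurable_const hev), ht.1, ht.2,
    ← ENNReal.ofReal_one, ← ENNReal.ofReal_sub _ hq.1, ← ENNReal.ofReal_sub _ (sub_nonneg.2 hq.2),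
    _root_.sub_sub_cancel]
  exact ⟨rfl, rfl⟩

def quantileBandDepth (J : ℕ) (q : ℝ) : ℝ := ∑ j ∈ Finset.Icc 2 J, (1 - (1 - q) ^ j - q ^ j)

lemma modBandDepth_eq_of_isQuantileCurve [IsProbabilityMeasure μ] (hx : IsQuantileCurve μ x q)
    (hq : q ∈ Icc 0 1) (J : ℕ) : modBandDepth μ J x = quantileBandDepth J q := by
  refine Finset.sum_congr rfl fun j hj => ?_
  obtain ⟨hj2, hjJ⟩ := Finset.mem_Icc.1 hj
  have hq' : 0 ≤ 1 - q := sub_nonneg.2 hq.2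
  have hc : 0 ≤ 1 - (1 - q) ^ j - q ^ j := by
    have h1 : (1 - q) ^ j ≤ 1 - q := pow_le_of_le_one hq' (by linarith [hq.1]) (by omega)
    have h2 : q ^ j ≤ q := pow_le_of_le_one hq.1 hq.2 (by omega)
    linarith
  refine integral_measure_prodMk_of_ae_eq (measurableSet_setOfPred.2 (by fun_prop)) hc ?_
  filter_upwards [hx.ae_measure_lt hq] with t ht
  have hev : Measurable fun z : C(unitI, ℝ) => z t := (continuous_eval_const t).measurable
  have hband := measure_pi_band μ (by omega) hjJ (measurableSet_lt measurable_const hev)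
    (measurableSet_lt hev measurable_const)
    (Set.disjoint_left.2 fun z (h1 : x t < z t) (h2 : z t < x t) => lt_asymm h1 h2)
  simp only [mem_ofPred_eq, not_lt] at hband
  rw [hband, ht.1, ht.2, ← ENNReal.ofReal_pow hq', ← ENNReal.ofReal_pow hq.1,
    ← ENNReal.ofReal_add (pow_nonneg hq' _) (pow_nonneg hq.1 _), ← ENNReal.ofReal_one,
    ← ENNReal.ofReal_sub _ (add_nonneg (pow_nonneg hq' _) (pow_nonneg hq.1 _)), sub_sub]

end QuantileCurve

lemma quantileBandDepth_succ {J : ℕ} (hJ : 1 ≤ J) (q : ℝ) :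
    quantileBandDepth (J + 1) q = quantileBandDepth J q + (1 - (1 - q) ^ (J + 1) - q ^ (J + 1)) :=
  Finset.sum_Icc_succ_top (by omega) _

lemma quantileBandDepth_half {J : ℕ} (hJ : 2 ≤ J) :
    quantileBandDepth J (1 / 2) = J - 2 + (2 : ℝ) ^ ((1 : ℤ) - J) := by
  induction J, hJ using Nat.le_induction with
  | base => norm_num [quantileBandDepth]
  | succ n hn ih =>
    rw [quantileBandDepth_succ (by omega), ih, show (1 : ℤ) - n = 1 + -n by ring,
      show (1 : ℤ) - (n + 1 : ℕ) = -n by push_cast; ring, zpow_add₀ two_ne_zero, zpow_neg,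
      zpow_natCast, zpow_one]
    norm_num [div_pow]
    field_simp
    ring

lemma exists_quantileBandDepth_eq {J : ℕ} (hJ : 2 ≤ J) {v : ℝ}
    (hv : v ∈ Ioc 0 ((J : ℝ) - 2 + (2 : ℝ) ^ ((1 : ℤ) - J))) :
    ∃ q ∈ Ioc (0 : ℝ) (1 / 2), quantileBandDepth J q = v := by
  have hcont : Continuous (quantileBandDepth J) := by unfold quantileBandDepth; fun_prop
  have hzero : quantileBandDepth J 0 = 0 :=
    Finset.sum_eq_zero fun j hj => by simp [zero_pow (by grind : j ≠ 0)]
  obtain ⟨q, hq, hqv⟩ := intermediate_value_Icc (by norm_num : (0 : ℝ) ≤ 1 / 2)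
    hcont.continuousOn (by rw [hzero, quantileBandDepth_half hJ]; exact Ioc_subset_Icc_self hv)
  refine ⟨q, ⟨lt_of_le_of_ne hq.1 ?_, hq.2⟩, hqv⟩
  rintro rfl
  exact hv.1.ne' (hqv.symm.trans hzero)

theorem depths_take_all_values_general
    {Ω : Type*} [MeasurableSpace Ω] (P : Measure Ω)
    [MeasurableSpace C(unitI, ℝ)] [BorelSpace C(unitI, ℝ)]
    (J : ℕ) (hJ : 2 ≤ J)
    (B : Ω → C(unitI, ℝ)) (hBM : IsStdBrownianMotion P B)
    (y0 : ℝ) (g : unitI → ℝ → ℝ)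
    (hgc : Continuous fun q : unitI × ℝ => g q.1 q.2)
    (hgm : ∀ t : unitI, StrictMono (g t))
    (X : Ω → C(unitI, ℝ)) (hXmeas : Measurable X)
    (hX : ∀ ω t, X ω t = g t (y0 + B ω t))
    (μ : Measure C(unitI, ℝ)) [IsProbabilityMeasure μ] (hμ : μ = P.map X)
    (ψ : ℝ → ℝ) :
    (∀ v ∈ Set.Ioc (0 : ℝ) ((J : ℝ) - 2 + (2 : ℝ) ^ ((1 : ℤ) - (J : ℤ))),
      ∃ x : C(unitI, ℝ), modBandDepth μ J x = v) ∧
    (∀ v ∈ Set.Ioc (0 : ℝ) (1 / 2 : ℝ), ∃ x : C(unitI, ℝ), modHalfRegionDepth μ x = v) ∧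
    (∀ v ∈ ψ '' Set.Ioo (0 : ℝ) 1, ∃ x : C(unitI, ℝ), intDepth μ ψ x = v) := by
  have hcurve : ∀ q ∈ Ioo (0 : ℝ) 1, ∃ x, IsQuantileCurve μ x q := by
    intro q hq
    have := nullSingletonClass_gaussianReal (μ := 0) one_ne_zero
    obtain ⟨r, rfl⟩ := exists_cdf_eq (μ := gaussianReal 0 1) hq
    exact ⟨_, hμ ▸ hBM.isQuantileCurve_map hgc hgm hXmeas hX r⟩
  refine ⟨fun v hv => ?_, fun v hv => ?_, ?_⟩
  · obtain ⟨q, hq, rfl⟩ := exists_quantileBandDepth_eq hJ hv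
    obtain ⟨x, hx⟩ := hcurve q ⟨hq.1, by linarith [hq.2]⟩
    exact ⟨x, modBandDepth_eq_of_isQuantileCurve hx ⟨hq.1.le, by linarith [hq.2]⟩ J⟩
  · obtain ⟨x, hx⟩ := hcurve v ⟨hv.1, by linarith [hv.2]⟩
    refine ⟨x, ?_⟩
    rw [modHalfRegionDepth_eq_of_isQuantileCurve hx ⟨hv.1.le, by linarith [hv.2]⟩,
      min_eq_left (by linarith [hv.2])]
  · rintro v ⟨q, hq, rfl⟩
    obtain ⟨x, hx⟩ := hcurve q hq
    exact ⟨x, intDepth_eq_of_isQuantileCurve hx hq.1.le ψ⟩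

/-- Theorem 3.3(a) (Brownian-motion case): with `X_t = g(t, y₀ + B_t)` for a standard Brownian
motion `B`, `g` continuous, strictly increasing in its second argument with `g(t,s) → ∞` as
`s → ∞`, and with `ID` built from `D_t = ψ ∘ F_t`, the depths `MBD`, `MHRD` and `ID` take all
values in `(0, A_J]`, `(0, 1/2]` and `ψ((0,1))`, respectively, where `A_J = J − 2 + 2^{1−J}`. -/
theorem depths_take_all_values
    {Ω : Type*} [MeasurableSpace Ω] (P : Measure Ω) [IsProbabilityMeasure P]
    [MeasurableSpace C(unitI, ℝ)] [BorelSpace C(unitI, ℝ)]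
    (J : ℕ) (hJ : 2 ≤ J)
    (B : Ω → C(unitI, ℝ)) (hBM : IsStdBrownianMotion P B)
    (y0 : ℝ) (g : unitI → ℝ → ℝ)
    (hgc : Continuous fun q : unitI × ℝ => g q.1 q.2)
    (hgm : ∀ t : unitI, StrictMono (g t))
    (hglim : ∀ t : unitI, Filter.Tendsto (g t) Filter.atTop Filter.atTop)
    (X : Ω → C(unitI, ℝ)) (hXmeas : Measurable X)
    (hX : ∀ ω t, X ω t = g t (y0 + B ω t))
    (μ : Measure C(unitI, ℝ)) [IsProbabilityMeasure μ] (hμ : μ = P.map X)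
    (ψ : ℝ → ℝ) (hψc : ContinuousOn ψ (Set.Icc 0 1))
    (hψnn : ∀ q ∈ Set.Icc (0 : ℝ) 1, 0 ≤ ψ q)
    (hψpos : ∀ q ∈ Set.Ioo (0 : ℝ) 1, 0 < ψ q)
    (hψ0 : ψ 0 = 0) (hψ1 : ψ 1 = 0) :
    (∀ v ∈ Set.Ioc (0 : ℝ) ((J : ℝ) - 2 + (2 : ℝ) ^ ((1 : ℤ) - (J : ℤ))),
      ∃ x : C(unitI, ℝ), modBandDepth μ J x = v) ∧
    (∀ v ∈ Set.Ioc (0 : ℝ) (1 / 2 : ℝ), ∃ x : C(unitI, ℝ), modHalfRegionDepth μ x = v) ∧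
    (∀ v ∈ ψ '' Set.Ioo (0 : ℝ) 1, ∃ x : C(unitI, ℝ), intDepth μ ψ x = v) :=
  depths_take_all_values_general P J hJ B hBM y0 g hgc hgm X hXmeas hX μ hμ ψ
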